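/- arXiv:2303.12443 — 5 statements merged into one kernel-verified Lean document; each statement's English description precedes it below -/
import Mathlib

section
/- The three functions E_sp, Ẽ_sph, L_yz on the tangent bundle of ℝ³ (with coordinates (x,y,z,ẋ,ẏ,ż)) are functionally independent at every point where the 3×3 matrix with rows (ẋ/(1+a²), ẏ, ż), (ν_x ẋ − xyẏ − xzż, ν_y ẏ − xyẋ − yzż, ν_z ż − xzẋ − yzẏ), (0, −z, y) is invertible, where ν_x = y²+z²+1, ν_y = x²+z²+1, ν_z = x²+y²+1. In particular this matrix has rank 3 on an open dense set. -/
/-!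
All three functions are quadratic polynomials in the velocities `(ẋ, ẏ, ż)` (the potentials only
involve positions), and `subMat` is exactly the block of their Jacobian in these directions; so
where `subMat` is invertible the derivative of the triple is onto `ℝ³`. The determinant of
`subMat` is a polynomial in `(x, y, z, ẋ, ẏ, ż)` equal to `1` at `(1, 1, 0, 0, 1, 0)`, so by the
identity principle its zero set has empty interior.
-/

/-- The spatial energy `E_sp` in the chart `(x,y,z,ẋ,ẏ,ż)` of `Tℝ³`. -/
noncomputable def Esp (a m₁ m₂ f : ℝ) (p : EuclideanSpace ℝ (Fin 6)) : ℝ :=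
  (1/2) * ((p 3)^2/(1+a^2) + (p 4)^2 + (p 5)^2)
    - m₁ / Real.sqrt ((p 0 - a)^2/(1+a^2) + (p 1)^2 + (p 2)^2)
    - m₂ / Real.sqrt ((p 0 + a)^2/(1+a^2) + (p 1)^2 + (p 2)^2)
    - f * ((p 0)^2/(1+a^2) + (p 1)^2 + (p 2)^2)

/-- The projected spherical energy `Ẽ_sph` in the chart of `W`. -/
noncomputable def EsphTilde (a mh₁ mh₂ f : ℝ) (p : EuclideanSpace ℝ (Fin 6)) : ℝ :=
  (1/2) * ((p 3)^2 + (p 4)^2 + (p 5)^2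
      + (p 0 * p 4 - p 1 * p 3)^2 + (p 1 * p 5 - p 2 * p 4)^2 + (p 2 * p 3 - p 0 * p 5)^2)
    - f * ((p 0)^2 + (p 1)^2 + (p 2)^2)
    - mh₁ * (1 + a * p 0) / ((p 0 - a)^2 + (1+a^2) * ((p 1)^2 + (p 2)^2))
    - mh₂ * (1 - a * p 0) / ((p 0 + a)^2 + (1+a^2) * ((p 1)^2 + (p 2)^2))

/-- The angular momentum `L_yz`. -/
def Lyz (p : EuclideanSpace ℝ (Fin 6)) : ℝ := p 1 * p 5 - p 2 * p 4

/-- The triple `(E_sp, Ẽ_sph, L_yz)` as a map `Tℝ³ ≅ ℝ⁶ → ℝ³`. -/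
noncomputable def firstIntegrals (a m₁ m₂ f mh₁ mh₂ : ℝ)
    (p : EuclideanSpace ℝ (Fin 6)) : EuclideanSpace ℝ (Fin 3) :=
  (WithLp.equiv 2 (Fin 3 → ℝ)).symm ![Esp a m₁ m₂ f p, EsphTilde a mh₁ mh₂ f p, Lyz p]

/-- The 3×3 submatrix of the Jacobian with respect to the velocities `(ẋ,ẏ,ż)`. -/
noncomputable def subMat (a : ℝ) (p : EuclideanSpace ℝ (Fin 6)) : Matrix (Fin 3) (Fin 3) ℝ :=
  !![p 3/(1+a^2), p 4, p 5;
     ((p 1)^2 + (p 2)^2 + 1) * p 3 - p 0 * p 1 * p 4 - p 0 * p 2 * p 5,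
       ((p 0)^2 + (p 2)^2 + 1) * p 4 - p 0 * p 1 * p 3 - p 1 * p 2 * p 5,
       ((p 0)^2 + (p 1)^2 + 1) * p 5 - p 0 * p 2 * p 3 - p 1 * p 2 * p 4;
     0, -(p 2), p 1]


open Matrix

theorem LinearMap.rank_eq_card_of_isUnit_det {𝕜 E ι : Type*} [RCLike 𝕜] [AddCommGroup E]
    [Module 𝕜 E] [Fintype ι] [DecidableEq ι] (L : E →ₗ[𝕜] EuclideanSpace 𝕜 ι) (v : ι → E)
    (hL : IsUnit (Matrix.of fun i j => L (v j) i).det) :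
    L.rank = Fintype.card ι := by
  have hsurj : Function.Surjective L := by
    intro w
    have hA : IsUnit (Matrix.of fun i j => L (v j) i) := (Matrix.isUnit_iff_isUnit_det _).2 hL
    obtain ⟨c, hc⟩ := mulVec_surjective_iff_isUnit.2 hA w.ofLp
    refine ⟨∑ j, c j • v j, PiLp.ext fun i => ?_⟩
    simp [← hc, mulVec, dotProduct, mul_comm]
  rw [LinearMap.rank, LinearMap.range_eq_top.2 hsurj, rank_top,
    ← Module.finrank_eq_rank, finrank_euclideanSpace]

theorem DifferentiableAt.fderiv_apply_eq_of_quadratic {𝕜 E : Type*} [NontriviallyNormedField 𝕜]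
    [NormedAddCommGroup E] [NormedSpace 𝕜 E] {g : E → 𝕜} {p v : E} (hg : DifferentiableAt 𝕜 g p)
    {b c : 𝕜} (h : ∀ t : 𝕜, g (p + t • v) = g p + b * t + c * t ^ 2) :
    fderiv 𝕜 g p v = b := by
  have hline : HasLineDerivAt 𝕜 g b p v := by
    rw [HasLineDerivAt, funext h]
    simpa using (((hasDerivAt_id (0 : 𝕜)).const_mul b).const_add (g p)).fun_add
      ((hasDerivAt_pow 2 (0 : 𝕜)).const_mul c)
  rw [← hg.lineDeriv_eq_fderiv, hline.lineDeriv]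

theorem DifferentiableAt.fderiv_euclideanSpace_apply {𝕜 E ι : Type*} [RCLike 𝕜] [NormedAddCommGroup E]
    [NormedSpace 𝕜 E] [Fintype ι] {F : E → EuclideanSpace 𝕜 ι} {p : E}
    (hF : DifferentiableAt 𝕜 F p) (v : E) (i : ι) :
    fderiv 𝕜 F p v i = fderiv 𝕜 (fun q => F q i) p v :=
  congrArg (fun L => L v)
    ((EuclideanSpace.proj i).hasFDerivAt.comp p hF.hasFDerivAt).fderiv.symm

@[fun_prop]
theorem EuclideanSpace.analyticAt_apply {𝕜 ι : Type*} [RCLike 𝕜] [Fintype ι] (i : ι)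
    (x : EuclideanSpace 𝕜 ι) : AnalyticAt 𝕜 (fun q : EuclideanSpace 𝕜 ι => q i) x :=
  (EuclideanSpace.proj i : EuclideanSpace 𝕜 ι →L[𝕜] 𝕜).analyticAt x

theorem AnalyticOnNhd.dense_setOf_ne_zero {𝕜 E F : Type*} [NontriviallyNormedField 𝕜]
    [NormedAddCommGroup E] [NormedSpace 𝕜 E] [NormedAddCommGroup F] [NormedSpace 𝕜 F]
    [PreconnectedSpace E] {g : E → F} (hg : AnalyticOnNhd 𝕜 g Set.univ) {x₀ : E}
    (hx₀ : g x₀ ≠ 0) : Dense {x | g x ≠ 0} := by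
  change Dense {x | g x = 0}ᶜ
  rw [← interior_eq_empty_iff_dense_compl, Set.eq_empty_iff_forall_notMem]
  intro x hx
  have hzero : g =ᶠ[nhds x] 0 := Filter.mem_of_superset (mem_interior_iff_mem_nhds.1 hx)
    fun _ hy => hy
  exact hx₀ (congrFun (hg.eq_of_eventuallyEq (analyticOnNhd_const (v := (0 : F))) hzero) x₀)

section FirstIntegrals

variable (a m₁ m₂ f mh₁ mh₂ : ℝ) (p : EuclideanSpace ℝ (Fin 6))

theorem differentiableAt_firstIntegrals (hyz : 0 < p 1 ^ 2 + p 2 ^ 2) :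
    DifferentiableAt ℝ (firstIntegrals a m₁ m₂ f mh₁ mh₂) p := by
  have hK : 0 < 1 + a ^ 2 := by positivity
  have hr₁ : 0 < (p 0 - a) ^ 2 / (1 + a ^ 2) + p 1 ^ 2 + p 2 ^ 2 := by
    have : 0 ≤ (p 0 - a) ^ 2 / (1 + a ^ 2) := by positivity
    linarith
  have hr₂ : 0 < (p 0 + a) ^ 2 / (1 + a ^ 2) + p 1 ^ 2 + p 2 ^ 2 := by
    have : 0 ≤ (p 0 + a) ^ 2 / (1 + a ^ 2) := by positivity
    linarith
  have hs₁ : 0 < (p 0 - a) ^ 2 + (1 + a ^ 2) * (p 1 ^ 2 + p 2 ^ 2) :=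
    add_pos_of_nonneg_of_pos (sq_nonneg _) (mul_pos hK hyz)
  have hs₂ : 0 < (p 0 + a) ^ 2 + (1 + a ^ 2) * (p 1 ^ 2 + p 2 ^ 2) :=
    add_pos_of_nonneg_of_pos (sq_nonneg _) (mul_pos hK hyz)
  rw [differentiableAt_piLp]
  intro i
  fin_cases i
  · show DifferentiableAt ℝ (Esp a m₁ m₂ f) p
    unfold Esp
    fun_prop (disch := simp [Real.sqrt_ne_zero', hr₁.ne', hr₂.ne', hr₁, hr₂])
  · show DifferentiableAt ℝ (EsphTilde a mh₁ mh₂ f) p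
    unfold EsphTilde
    fun_prop (disch := simp [hs₁.ne', hs₂.ne'])
  · show DifferentiableAt ℝ Lyz p
    unfold Lyz
    fun_prop

theorem firstIntegrals_add_smul_single_velocity (i j : Fin 3) :
    ∃ c : ℝ, ∀ t : ℝ,
      firstIntegrals a m₁ m₂ f mh₁ mh₂ (p + t • EuclideanSpace.single (Fin.natAdd 3 j) 1) i =
        firstIntegrals a m₁ m₂ f mh₁ mh₂ p i + subMat a p i j * t + c * t ^ 2 := by
  refine ⟨!![1 / (1 + a ^ 2) / 2, 1 / 2, 1 / 2;
    (1 + p 1 ^ 2 + p 2 ^ 2) / 2, (1 + p 0 ^ 2 + p 2 ^ 2) / 2, (1 + p 0 ^ 2 + p 1 ^ 2) / 2;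
    0, 0, 0] i j, fun t => ?_⟩
  fin_cases i <;> fin_cases j <;>
    simp only [firstIntegrals, Esp, EsphTilde, Lyz, subMat, WithLp.equiv_symm_apply,
      PiLp.add_apply, PiLp.smul_apply, PiLp.single_eq_same, PiLp.single_eq_of_ne, ne_eq,
      Fin.natAdd_eq_addNat, Fin.reduceAddNat, Fin.reduceEq, Fin.reduceFinMk, Fin.isValue,
      Fin.mk_one, Fin.zero_eta, Nat.reduceAdd, not_false_eq_true, of_apply, cons_val,
      cons_val', cons_val_zero, cons_val_one, cons_val_fin_one, smul_eq_mul, mul_one,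
      mul_zero, add_zero] <;> ring

theorem fderiv_firstIntegrals_single_velocity (hyz : 0 < p 1 ^ 2 + p 2 ^ 2) (i j : Fin 3) :
    fderiv ℝ (firstIntegrals a m₁ m₂ f mh₁ mh₂) p (EuclideanSpace.single (Fin.natAdd 3 j) 1) i =
      subMat a p i j := by
  have hF := differentiableAt_firstIntegrals a m₁ m₂ f mh₁ mh₂ p hyz
  obtain ⟨c, hc⟩ := firstIntegrals_add_smul_single_velocity a m₁ m₂ f mh₁ mh₂ p i j
  rw [hF.fderiv_euclideanSpace_apply]
  exact ((differentiableAt_piLp 2).1 hF i).fderiv_apply_eq_of_quadratic hc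

end FirstIntegrals

theorem sq_add_sq_pos_of_det_subMat_ne_zero {a : ℝ} {p : EuclideanSpace ℝ (Fin 6)}
    (h : (subMat a p).det ≠ 0) : 0 < p 1 ^ 2 + p 2 ^ 2 := by
  by_contra! h0
  have h1 : p 1 = 0 := by nlinarith [sq_nonneg (p 1), sq_nonneg (p 2)]
  have h2 : p 2 = 0 := by nlinarith [sq_nonneg (p 1), sq_nonneg (p 2)]
  exact h (by simp [subMat, det_fin_three, h1, h2])

theorem analyticOnNhd_det_subMat (a : ℝ) :
    AnalyticOnNhd ℝ (fun q => (subMat a q).det) Set.univ := by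
  intro x _
  simp only [subMat, det_fin_three, of_apply, cons_val', cons_val_zero, cons_val_fin_one,
    cons_val_one, cons_val]
  fun_prop

theorem exists_det_subMat_ne_zero (a : ℝ) : ∃ p, (subMat a p).det ≠ 0 :=
  ⟨WithLp.toLp 2 ![1, 1, 0, 0, 1, 0], by simp [subMat, det_fin_three]⟩

theorem stmt_2_general (a m₁ m₂ f mh₁ mh₂ : ℝ) :
    (∀ p : EuclideanSpace ℝ (Fin 6), IsUnit (subMat a p).det →
      LinearMap.rank ((fderiv ℝ (firstIntegrals a m₁ m₂ f mh₁ mh₂) p) :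
        EuclideanSpace ℝ (Fin 6) →ₗ[ℝ] EuclideanSpace ℝ (Fin 3)) = 3) ∧
    (∃ s : Set (EuclideanSpace ℝ (Fin 6)), IsOpen s ∧ Dense s ∧
      ∀ p ∈ s, (subMat a p).rank = 3) := by
  have hdet := analyticOnNhd_det_subMat a
  obtain ⟨p₀, hp₀⟩ := exists_det_subMat_ne_zero a
  refine ⟨fun p hp => ?_, {q | (subMat a q).det ≠ 0},
    isOpen_ne_fun hdet.continuous continuous_const,
    hdet.dense_setOf_ne_zero hp₀, fun q hq => ?_⟩
  · have hyz := sq_add_sq_pos_of_det_subMat_ne_zero hp.ne_zero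
    have hjac : (Matrix.of fun i j => fderiv ℝ (firstIntegrals a m₁ m₂ f mh₁ mh₂) p
        (EuclideanSpace.single (Fin.natAdd 3 j) 1) i) = subMat a p :=
      Matrix.ext (fderiv_firstIntegrals_single_velocity a m₁ m₂ f mh₁ mh₂ p hyz)
    exact (LinearMap.rank_eq_card_of_isUnit_det _ _ (hjac ▸ hp)).trans (by simp)
  · rw [rank_of_isUnit _ ((isUnit_iff_isUnit_det _).2 (isUnit_iff_ne_zero.2 hq))]
    simp

/-- `E_sp`, `Ẽ_sph`, `L_yz` are functionally independent (the derivative of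
the triple has rank 3) at every point where the displayed 3×3 velocity submatrix of their
Jacobian is invertible; in particular this matrix has rank 3 on an open dense set. -/
theorem stmt_2 (a m₁ m₂ f mh₁ mh₂ : ℝ)
    (hmh₁ : mh₁ = m₁ * Real.sqrt (1+a^2)) (hmh₂ : mh₂ = m₂ * Real.sqrt (1+a^2)) :
    (∀ p : EuclideanSpace ℝ (Fin 6), IsUnit (subMat a p).det →
      LinearMap.rank ((fderiv ℝ (firstIntegrals a m₁ m₂ f mh₁ mh₂) p) :
        EuclideanSpace ℝ (Fin 6) →ₗ[ℝ] EuclideanSpace ℝ (Fin 3)) = 3) ∧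
    (∃ s : Set (EuclideanSpace ℝ (Fin 6)), IsOpen s ∧ Dense s ∧
      ∀ p ∈ s, (subMat a p).rank = 3) :=
  stmt_2_general a m₁ m₂ f mh₁ mh₂
end

section
/- Let q = (q₁,q₂,q₃,q₄) ∈ S³ with q₄ < 0 satisfy q₁²/A² + q₂²/B² + q₃²/B² = q₄², and let N = (2q₁/A², 2q₂/B², 2q₃/B², −2q₄). Then the vector n obtained by applying the 3×4 projection matrix with rows (−1/q₄, 0, 0, q₁/q₄²), (0, −1/q₄, 0, q₂/q₄²), (0, 0, −1/q₄, q₃/q₄²) to N equals (B²+1) times the gradient, with respect to the metric with norm ‖(x,y,z)‖_a² = x²/(1+a²)+y²+z², of f(x,y,z) = x²/A² + y²/B² + z²/B² − 1 evaluated at (x,y,z) = (−q₁/q₄, −q₂/q₄, −q₃/q₄), where 1 + a² = (A²+1)/(B²+1). -/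
/-- Each row contributes `2q/c` from its own column and `2q` from the `q₄`-column, i.e. the
factor `(c + 1)/c`; for the `x`-row `c = A²` and `A² + 1 = (B² + 1)(1 + a²)`. -/
theorem projection_row_apply_normal (c q w : ℝ) (hc : c ≠ 0) :
    (-1/w) * (2*q/c) + (q/w^2) * (-2*w) = (c + 1) * (2*(-q/w)/c) := by
  rcases eq_or_ne w 0 with rfl | hw
  · simp
  · field_simp
    ring

theorem stmt_6_general (A B a q₁ q₂ q₃ q₄ : ℝ) (hA : 0 < B) (hAB : B < A)
    (ha : 1 + a^2 = (A^2 + 1)/(B^2 + 1))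
    (x y z : ℝ) (hx : x = -q₁/q₄) (hy : y = -q₂/q₄) (hz : z = -q₃/q₄)
    (N : Fin 4 → ℝ) (hN : N = ![2*q₁/A^2, 2*q₂/B^2, 2*q₃/B^2, -2*q₄])
    (n : Fin 3 → ℝ)
    (hn : n = ![(-1/q₄) * N 0 + (q₁/q₄^2) * N 3,
                (-1/q₄) * N 1 + (q₂/q₄^2) * N 3,
                (-1/q₄) * N 2 + (q₃/q₄^2) * N 3]) :
    n = (B^2 + 1) • ![(1+a^2) * (2*x/A^2), 2*y/B^2, 2*z/B^2] := by
  have hA₀ : A^2 ≠ 0 := by positivity [hA.trans hAB]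
  have hB₀ : B^2 ≠ 0 := by positivity
  have hscale : (B^2 + 1) * (1 + a^2) = A^2 + 1 := by
    rw [ha]
    field_simp
  subst hx hy hz hN hn
  ext i
  fin_cases i <;> simp only [Fin.zero_eta, Fin.mk_one, Fin.reduceFinMk, Pi.smul_apply,
    Matrix.cons_val, smul_eq_mul]
  · rw [← mul_assoc (B^2 + 1), hscale]
    exact projection_row_apply_normal _ _ _ hA₀
  · exact projection_row_apply_normal _ _ _ hB₀
  · exact projection_row_apply_normal _ _ _ hB₀

/-- For `q ∈ S³` with `q₄ < 0` on the spherical quadric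
`q₁²/A² + q₂²/B² + q₃²/B² = q₄²`, applying the 3×4 projection matrix to the normal
`N = (2q₁/A², 2q₂/B², 2q₃/B², −2q₄)` yields `(B²+1)` times the `‖·‖_a`-gradient of
`f(x,y,z) = x²/A² + y²/B² + z²/B² − 1` at `(x,y,z) = (−q₁/q₄, −q₂/q₄, −q₃/q₄)`,
where `1 + a² = (A²+1)/(B²+1)`. -/
theorem stmt_6 (A B a q₁ q₂ q₃ q₄ : ℝ) (hA : 0 < B) (hAB : B < A)
    (hsph : q₁^2 + q₂^2 + q₃^2 + q₄^2 = 1) (hq₄ : q₄ < 0)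
    (hquad : q₁^2/A^2 + q₂^2/B^2 + q₃^2/B^2 = q₄^2)
    (ha : 1 + a^2 = (A^2 + 1)/(B^2 + 1))
    (x y z : ℝ) (hx : x = -q₁/q₄) (hy : y = -q₂/q₄) (hz : z = -q₃/q₄)
    (N : Fin 4 → ℝ) (hN : N = ![2*q₁/A^2, 2*q₂/B^2, 2*q₃/B^2, -2*q₄])
    (n : Fin 3 → ℝ)
    (hn : n = ![(-1/q₄) * N 0 + (q₁/q₄^2) * N 3,
                (-1/q₄) * N 1 + (q₂/q₄^2) * N 3,
                (-1/q₄) * N 2 + (q₃/q₄^2) * N 3]) :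
    n = (B^2 + 1) • ![(1+a^2) * (2*x/A^2), 2*y/B^2, 2*z/B^2] :=
  stmt_6_general A B a q₁ q₂ q₃ q₄ hA hAB ha x y z hx hy hz N hN n hn
end

section
/- The functions C₃, C₄, …, Cₙ on T ℝⁿ, where C_k = Σ_{2 ≤ i < j ≤ k} (q_i q̇_j − q_j q̇_i)², are functionally independent on an open dense subset: the (n−2)×(2n) Jacobian matrix of (C₃,…,Cₙ) with respect to (q₂,…,qₙ,q̇₂,…,q̇ₙ) has rank n−2 generically, since its submatrix (∂C_k/∂q_j)_{3≤k≤n, 2≤j≤n} is lower-triangular-like with (k,j)-entries vanishing for j > k and generically nonzero otherwise. -/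
/-- Partial derivative with respect to the coordinate `qᵢ` on `Tℝⁿ`
(points being pairs `(q, q̇)` of `ℕ`-indexed families). -/
noncomputable def pderivQ (i : ℕ) (F : (ℕ → ℝ) × (ℕ → ℝ) → ℝ)
    (z : (ℕ → ℝ) × (ℕ → ℝ)) : ℝ :=
  deriv (fun s => F (Function.update z.1 i s, z.2)) (z.1 i)

/-- Partial derivative with respect to the velocity coordinate `q̇ᵢ`. -/
noncomputable def pderivV (i : ℕ) (F : (ℕ → ℝ) × (ℕ → ℝ) → ℝ)
    (z : (ℕ → ℝ) × (ℕ → ℝ)) : ℝ :=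
  deriv (fun s => F (z.1, Function.update z.2 i s)) (z.2 i)

/-- The angular momentum component `L_{ij} = qᵢ q̇ⱼ − qⱼ q̇ᵢ`. -/
def angMom (i j : ℕ) (z : (ℕ → ℝ) × (ℕ → ℝ)) : ℝ :=
  z.1 i * z.2 j - z.1 j * z.2 i

/-- `C_k = Σ_{2 ≤ i < j ≤ k} L_{ij}²`. -/
def Cfun (k : ℕ) (z : (ℕ → ℝ) × (ℕ → ℝ)) : ℝ :=
  ∑ i ∈ Finset.Icc 2 k, ∑ j ∈ Finset.Icc (i+1) k, (angMom i j z)^2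

/-- The `(n−2) × 2(n−1)` Jacobian matrix of `(C₃, …, Cₙ)` with respect to the
coordinates `(q₂,…,qₙ, q̇₂,…,q̇ₙ)`: row `k` corresponds to `C_{k+3}` and the column
`inl j` (resp. `inr j`) to the coordinate `q_{j+2}` (resp. `q̇_{j+2}`). -/
noncomputable def jacC (n : ℕ) (z : (ℕ → ℝ) × (ℕ → ℝ)) :
    Matrix (Fin (n-2)) (Fin (n-1) ⊕ Fin (n-1)) ℝ :=
  fun k j => Sum.elim (fun j : Fin (n-1) => pderivQ ((j : ℕ) + 2) (Cfun ((k : ℕ) + 3)) z)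
                      (fun j : Fin (n-1) => pderivV ((j : ℕ) + 2) (Cfun ((k : ℕ) + 3)) z) j

/-!
`∂C_k/∂q_m` vanishes for `m > k`, and `∂C_k/∂q_k = -2 Σ_{2 ≤ i < k} L_{ik} q̇_i`. Hence the columns
of `q₃, …, qₙ` form a lower triangular square block of the Jacobian, invertible wherever these
diagonal entries are nonzero. Each of them is a homogeneous cubic which is nonzero at
`w = (i ↦ i, i ↦ 1)`, so it has only finitely many zeros on every line `z + t w`; the common
nonvanishing locus is therefore open and dense.
-/

theorem Matrix.rank_eq_card_height_of_isUnit_det_submatrix {m n R : Type*} [Fintype m]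
    [DecidableEq m] [Fintype n] [CommRing R] [StrongRankCondition R] (A : Matrix m n R)
    (c : m → n) (h : IsUnit (A.submatrix id c).det) : A.rank = Fintype.card m :=
  le_antisymm A.rank_le_card_height <| by
    rw [← (A.submatrix id c).rank_of_isUnit ((Matrix.isUnit_iff_isUnit_det _).mpr h)]
    exact A.rank_submatrix_le id c

theorem finite_setOf_cubic_eq_zero {a b c d : ℝ} (hd : d ≠ 0) :
    {t : ℝ | a + b * t + c * t ^ 2 + d * t ^ 3 = 0}.Finite := by
  refine (Polynomial.finite_setOfPred_isRoot
    (Cubic.ne_zero_of_a_ne_zero (P := ⟨d, c, b, a⟩) hd)).subset fun t ht => ?_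
  simp only [Set.mem_ofPred_eq, Polynomial.IsRoot, Cubic.toPoly, Polynomial.eval_add,
    Polynomial.eval_mul, Polynomial.eval_pow, Polynomial.eval_C, Polynomial.eval_X] at ht ⊢
  linear_combination ht

theorem dense_of_finite_setOf_add_smul_notMem {E : Type*} [AddCommGroup E] [Module ℝ E]
    [TopologicalSpace E] [ContinuousAdd E] [ContinuousSMul ℝ E] {s : Set E} (w : E)
    (h : ∀ z, {t : ℝ | z + t • w ∉ s}.Finite) : Dense s := by
  refine fun z => mem_closure_iff_nhds.mpr fun V hV => ?_
  have hline : (fun t : ℝ => z + t • w) ⁻¹' V ∈ nhds (0 : ℝ) :=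
    (show Continuous fun t : ℝ => z + t • w by fun_prop).continuousAt.preimage_mem_nhds
      (by simpa using hV)
  obtain ⟨t, htV, hts⟩ := ((infinite_of_mem_nhds 0 hline).sdiff (h z)).nonempty
  exact ⟨z + t • w, htV, not_not.mp hts⟩

def angMomVelSum (k : ℕ) (z : (ℕ → ℝ) × (ℕ → ℝ)) : ℝ :=
  ∑ i ∈ Finset.Icc 2 (k - 1), angMom i k z * z.2 i

theorem hasDerivAt_update_apply {ι 𝕜 : Type*} [DecidableEq ι] [NontriviallyNormedField 𝕜]
    (q : ι → 𝕜) (m i : ι) (s : 𝕜) :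
    HasDerivAt (fun s => Function.update q m s i) (if i = m then 1 else 0) s := by
  by_cases h : i = m
  · subst h
    simpa using hasDerivAt_id' s
  · simpa [h] using hasDerivAt_const s (q i)

theorem hasDerivAt_angMom_update (i j m : ℕ) (z : (ℕ → ℝ) × (ℕ → ℝ)) :
    HasDerivAt (fun s => angMom i j (Function.update z.1 m s, z.2))
      ((if i = m then 1 else 0) * z.2 j - (if j = m then 1 else 0) * z.2 i) (z.1 m) :=
  ((hasDerivAt_update_apply z.1 m i _).mul_const _).sub
    ((hasDerivAt_update_apply z.1 m j _).mul_const _)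

theorem pderivQ_Cfun (k m : ℕ) (z : (ℕ → ℝ) × (ℕ → ℝ)) :
    pderivQ m (Cfun k) z = ∑ i ∈ Finset.Icc 2 k, ∑ j ∈ Finset.Icc (i + 1) k,
      2 * angMom i j z *
        ((if i = m then 1 else 0) * z.2 j - (if j = m then 1 else 0) * z.2 i) := by
  refine HasDerivAt.deriv ?_
  refine HasDerivAt.fun_sum fun i _ => HasDerivAt.fun_sum fun j _ => ?_
  simpa using (hasDerivAt_angMom_update i j m z).fun_pow 2

theorem pderivQ_Cfun_of_lt {k m : ℕ} (hkm : k < m) (z : (ℕ → ℝ) × (ℕ → ℝ)) :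
    pderivQ m (Cfun k) z = 0 := by
  rw [pderivQ_Cfun]
  refine Finset.sum_eq_zero fun i hi => Finset.sum_eq_zero fun j hj => ?_
  simp only [Finset.mem_Icc] at hi hj
  simp [show i ≠ m by omega, show j ≠ m by omega]

theorem pderivQ_Cfun_self (k : ℕ) (z : (ℕ → ℝ) × (ℕ → ℝ)) :
    pderivQ k (Cfun k) z = -2 * angMomVelSum k z := by
  have inner : ∀ i, (∑ j ∈ Finset.Icc (i + 1) k, 2 * angMom i j z *
      ((if i = k then 1 else 0) * z.2 j - (if j = k then 1 else 0) * z.2 i)) =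
      if i < k then -2 * (angMom i k z * z.2 i) else 0 := by
    intro i
    by_cases hik : i < k
    · rw [if_pos hik, Finset.sum_eq_single_of_mem k (Finset.mem_Icc.mpr ⟨hik, le_rfl⟩)]
      · simp only [hik.ne, if_true, if_false]
        ring
      · intro j _ hjk
        simp [hik.ne, hjk]
    · rw [if_neg hik, Finset.Icc_eq_empty (by omega), Finset.sum_empty]
  have hfilter : (Finset.Icc 2 k).filter (· < k) = Finset.Icc 2 (k - 1) := by
    ext i
    simp only [Finset.mem_filter, Finset.mem_Icc]
    omega
  rw [pderivQ_Cfun, Finset.sum_congr rfl fun i _ => inner i, ← Finset.sum_filter, hfilter,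
    angMomVelSum, Finset.mul_sum]

theorem continuous_angMomVelSum (k : ℕ) : Continuous (angMomVelSum k) := by
  unfold angMomVelSum angMom
  fun_prop

theorem angMomVelSum_add_smul (k : ℕ) (z w : (ℕ → ℝ) × (ℕ → ℝ)) :
    ∃ a b c : ℝ, ∀ t : ℝ,
      angMomVelSum k (z + t • w) = a + b * t + c * t ^ 2 + angMomVelSum k w * t ^ 3 := by
  let mixed (i : ℕ) : ℝ := z.1 i * w.2 k + w.1 i * z.2 k - z.1 k * w.2 i - w.1 k * z.2 i
  refine ⟨angMomVelSum k z, ∑ i ∈ Finset.Icc 2 (k - 1), (angMom i k z * w.2 i + mixed i * z.2 i),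
    ∑ i ∈ Finset.Icc 2 (k - 1), (mixed i * w.2 i + angMom i k w * z.2 i), fun t => ?_⟩
  simp only [angMomVelSum, Finset.sum_mul, ← Finset.sum_add_distrib]
  refine Finset.sum_congr rfl fun i _ => ?_
  simp only [angMom, mixed, Prod.fst_add, Prod.snd_add, Prod.smul_fst, Prod.smul_snd,
    Pi.add_apply, Pi.smul_apply, smul_eq_mul]
  ring

theorem angMomVelSum_natCast_one_neg {k : ℕ} (hk : 3 ≤ k) :
    angMomVelSum k ((↑), 1) < 0 := by
  refine Finset.sum_neg (fun i hi => ?_) ⟨2, Finset.mem_Icc.mpr ⟨le_rfl, by omega⟩⟩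
  have hik : (i : ℝ) < k := by
    have := (Finset.mem_Icc.mp hi).2
    exact_mod_cast (show i < k by omega)
  simp only [angMom, Pi.one_apply]
  linarith

theorem finite_setOf_angMomVelSum_add_smul_eq_zero {k : ℕ} (hk : 3 ≤ k)
    (z : (ℕ → ℝ) × (ℕ → ℝ)) :
    {t : ℝ | angMomVelSum k (z + t • ((↑), 1)) = 0}.Finite := by
  obtain ⟨a, b, c, h⟩ := angMomVelSum_add_smul k z ((↑), 1)
  simpa only [h] using finite_setOf_cubic_eq_zero (angMomVelSum_natCast_one_neg hk).ne

theorem rank_jacC_of_forall_ne_zero (n : ℕ) {z : (ℕ → ℝ) × (ℕ → ℝ)}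
    (hz : ∀ k ∈ Finset.Icc 3 n, angMomVelSum k z ≠ 0) : (jacC n z).rank = n - 2 := by
  let qCols : Fin (n - 2) → Fin (n - 1) ⊕ Fin (n - 1) := fun k => .inl ⟨k + 1, by omega⟩
  have hlower : ((jacC n z).submatrix id qCols).IsLowerTriangular := fun k j hkj =>
    pderivQ_Cfun_of_lt (show (k : ℕ) + 3 < j + 1 + 2 by have : (k : ℕ) < j := hkj; omega) z
  have hdiag : ∀ k : Fin (n - 2), (jacC n z).submatrix id qCols k k ≠ 0 := fun k => by
    simp only [Matrix.submatrix_apply, id, qCols, jacC, Sum.elim_inl, pderivQ_Cfun_self]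
    exact mul_ne_zero (by norm_num) (hz _ (Finset.mem_Icc.mpr ⟨by omega, by omega⟩))
  simpa using (jacC n z).rank_eq_card_height_of_isUnit_det_submatrix qCols <| by
    rw [Matrix.det_of_isLowerTriangular _ hlower, isUnit_iff_ne_zero]
    exact Finset.prod_ne_zero_iff.mpr fun k _ => hdiag k

theorem stmt_11_general (n : ℕ) :
    ∃ s : Set ((ℕ → ℝ) × (ℕ → ℝ)), IsOpen s ∧ Dense s ∧
      ∀ z ∈ s, (jacC n z).rank = n - 2 := by
  let s := ⋂ k ∈ Finset.Icc 3 n, {z | angMomVelSum k z ≠ 0}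
  have hopen : IsOpen s :=
    isOpen_biInter_finset fun k _ => isOpen_ne_fun (continuous_angMomVelSum k) continuous_const
  have hdense : Dense s := dense_of_finite_setOf_add_smul_notMem ((↑), 1) fun z =>
    ((Finset.Icc 3 n).finite_toSet.biUnion fun k hk =>
      finite_setOf_angMomVelSum_add_smul_eq_zero (Finset.mem_Icc.mp hk).1 z).subset
      fun t ht => by simpa [s, and_assoc] using ht
  exact ⟨s, hopen, hdense, fun z hz => rank_jacC_of_forall_ne_zero n (by simpa [s] using hz)⟩

/-- The functions `C₃, …, Cₙ` are functionally independent on an open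
dense subset of phase space: the Jacobian matrix of `(C₃,…,Cₙ)` with respect to
`(q₂,…,qₙ, q̇₂,…,q̇ₙ)` has rank `n − 2` there. -/
theorem stmt_11 (n : ℕ) (hn : 3 ≤ n) :
    ∃ s : Set ((ℕ → ℝ) × (ℕ → ℝ)), IsOpen s ∧ Dense s ∧
      ∀ z ∈ s, (jacC n z).rank = n - 2 :=
  stmt_11_general n
end

section
/- For the point q = (q₁,q₂,q₃,q₄) on the unit sphere S³ ⊂ ℝ⁴ with q₄ < 0, centrally projected to q̃ = (x,y,z) = (−q₁/q₄, −q₂/q₄, −q₃/q₄), and with Z̃₁ = (a,0,0), Z̃₂ = (−a,0,0), the following identities hold: ‖q̃ − Z̃₁‖_a = ‖q̃ − Z̃₁‖ · ‖G₁‖/√(1+a²) where ‖·‖_a is the norm with ‖(x,y,z)‖_a² = x²/(1+a²)+y²+z², ‖·‖ is the Euclidean norm in the hyperplane {q₄ = −1} ⊂ ℝ⁴, G₁ is the foot of the perpendicular from the origin of ℝ⁴ to the line through (a,0,0,−1) and (x,y,z,−1). The analogous identity holds for Z̃₂. -/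
/-!
If `G = Z + t • d` is the foot of the perpendicular from the origin to the line through `Z` with
direction `d`, then `‖d‖² ‖G‖² = ‖Z‖² ‖d‖² - ⟪Z, d⟫²` (the Gram determinant of `Z, d`).
For `Z = (a, 0, 0, -1)` and `d = (x - a, y, z, 0)` the right-hand side is
`(x - a)² + (1 + a²)(y² + z²) = (1 + a²) ‖(x - a, y, z)‖_a²`.
-/

open RealInnerProductSpace

theorem norm_sq_mul_norm_sq_of_inner_eq_zero {E : Type*} [NormedAddCommGroup E]
    [InnerProductSpace ℝ E] {Z d : E} {t : ℝ} (hperp : ⟪Z + t • d, d⟫ = 0) :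
    ‖d‖ ^ 2 * ‖Z + t • d‖ ^ 2 = ‖Z‖ ^ 2 * ‖d‖ ^ 2 - ⟪Z, d⟫ ^ 2 := by
  have ht : ⟪Z, d⟫ + t * ‖d‖ ^ 2 = 0 := by
    rwa [inner_add_left, inner_smul_left, real_inner_self_eq_norm_sq] at hperp
  have hG : ‖Z + t • d‖ ^ 2 = ‖Z‖ ^ 2 + 2 * t * ⟪Z, d⟫ + t ^ 2 * ‖d‖ ^ 2 := by
    rw [norm_add_sq_real, inner_smul_right, norm_smul, mul_pow, Real.norm_eq_abs, sq_abs]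
    ring
  rw [hG]
  linear_combination (⟪Z, d⟫ + t * ‖d‖ ^ 2) * ht

theorem sqrt_kepler_normSq_eq_norm_mul_norm_foot (a x y z t : ℝ)
    (w Z G : EuclideanSpace ℝ (Fin 4))
    (hw : w = (WithLp.equiv 2 (Fin 4 → ℝ)).symm ![x, y, z, -1])
    (hZ : Z = (WithLp.equiv 2 (Fin 4 → ℝ)).symm ![a, 0, 0, -1])
    (hG : G = Z + t • (w - Z)) (hperp : ⟪G, w - Z⟫ = 0) :
    Real.sqrt ((x - a) ^ 2 / (1 + a ^ 2) + y ^ 2 + z ^ 2)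
      = ‖w - Z‖ * ‖G‖ / Real.sqrt (1 + a ^ 2) := by
  subst hG
  have ha : (0 : ℝ) < 1 + a ^ 2 := by positivity
  have hZZ : ‖Z‖ ^ 2 = 1 + a ^ 2 := by
    simp [hZ, EuclideanSpace.norm_sq_eq, Fin.sum_univ_four]
    ring
  have hdd : ‖w - Z‖ ^ 2 = (x - a) ^ 2 + y ^ 2 + z ^ 2 := by
    simp [hZ, hw, EuclideanSpace.norm_sq_eq, Fin.sum_univ_four]
  have hZd : ⟪Z, w - Z⟫ = a * (x - a) := by
    simp [hZ, hw, PiLp.inner_apply, Fin.sum_univ_four]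
    ring
  have gram := norm_sq_mul_norm_sq_of_inner_eq_zero hperp
  rw [hZZ, hdd, hZd] at gram
  rw [← Real.sqrt_sq (by positivity : 0 ≤ ‖w - Z‖ * ‖Z + t • (w - Z)‖),
    ← Real.sqrt_div' _ ha.le, mul_pow, hdd]
  congr 1
  field_simp
  linear_combination -gram

theorem stmt_12_general (a x y z t₁ t₂ : ℝ)
    (w Z₁ Z₂ G₁ G₂ : EuclideanSpace ℝ (Fin 4))
    (hw : w = (WithLp.equiv 2 (Fin 4 → ℝ)).symm ![x, y, z, -1])
    (hZ₁ : Z₁ = (WithLp.equiv 2 (Fin 4 → ℝ)).symm ![a, 0, 0, -1])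
    (hZ₂ : Z₂ = (WithLp.equiv 2 (Fin 4 → ℝ)).symm ![-a, 0, 0, -1])
    (hG₁ : G₁ = Z₁ + t₁ • (w - Z₁)) (hG₂ : G₂ = Z₂ + t₂ • (w - Z₂))
    (hperp₁ : (inner ℝ G₁ (w - Z₁) : ℝ) = 0) (hperp₂ : (inner ℝ G₂ (w - Z₂) : ℝ) = 0) :
    Real.sqrt ((x - a)^2/(1+a^2) + y^2 + z^2)
        = ‖w - Z₁‖ * ‖G₁‖ / Real.sqrt (1+a^2) ∧
    Real.sqrt ((x + a)^2/(1+a^2) + y^2 + z^2)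
        = ‖w - Z₂‖ * ‖G₂‖ / Real.sqrt (1+a^2) := by
  refine ⟨sqrt_kepler_normSq_eq_norm_mul_norm_foot a x y z t₁ w Z₁ G₁ hw hZ₁ hG₁ hperp₁, ?_⟩
  simpa only [sub_neg_eq_add, neg_sq] using
    sqrt_kepler_normSq_eq_norm_mul_norm_foot (-a) x y z t₂ w Z₂ G₂ hw hZ₂ hG₂ hperp₂

/-- For `q ∈ S³` with `q₄ < 0` centrally projected to
`q̃ = (x,y,z) = (−q₁/q₄, −q₂/q₄, −q₃/q₄)`, with Kepler centers `Z̃₁ = (a,0,0)`,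
`Z̃₂ = (−a,0,0)` in the hyperplane `{q₄ = −1}`, and `Gᵢ` the foot of the perpendicular
from the origin of `ℝ⁴` to the line through `Z̃ᵢ` and `q̃`, one has
`‖q̃ − Z̃ᵢ‖_a = ‖q̃ − Z̃ᵢ‖ · ‖Gᵢ‖ / √(1+a²)` where `‖(x,y,z)‖_a² = x²/(1+a²) + y² + z²`. -/
theorem stmt_12 (a x y z t₁ t₂ : ℝ)
    (q w Z₁ Z₂ G₁ G₂ : EuclideanSpace ℝ (Fin 4))
    (hq : ‖q‖ = 1) (hq4 : q 3 < 0)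
    (hx : x = -(q 0)/(q 3)) (hy : y = -(q 1)/(q 3)) (hz : z = -(q 2)/(q 3))
    (hw : w = (WithLp.equiv 2 (Fin 4 → ℝ)).symm ![x, y, z, -1])
    (hZ₁ : Z₁ = (WithLp.equiv 2 (Fin 4 → ℝ)).symm ![a, 0, 0, -1])
    (hZ₂ : Z₂ = (WithLp.equiv 2 (Fin 4 → ℝ)).symm ![-a, 0, 0, -1])
    (hG₁ : G₁ = Z₁ + t₁ • (w - Z₁)) (hG₂ : G₂ = Z₂ + t₂ • (w - Z₂))
    (hperp₁ : (inner ℝ G₁ (w - Z₁) : ℝ) = 0) (hperp₂ : (inner ℝ G₂ (w - Z₂) : ℝ) = 0) :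
    Real.sqrt ((x - a)^2/(1+a^2) + y^2 + z^2)
        = ‖w - Z₁‖ * ‖G₁‖ / Real.sqrt (1+a^2) ∧
    Real.sqrt ((x + a)^2/(1+a^2) + y^2 + z^2)
        = ‖w - Z₂‖ * ‖G₂‖ / Real.sqrt (1+a^2) :=
  stmt_12_general a x y z t₁ t₂ w Z₁ Z₂ G₁ G₂ hw hZ₁ hZ₂ hG₁ hG₂ hperp₁ hperp₂
end

section
/- Let L_{ij} = q_i q̇_j − q_j q̇_i for 2 ≤ i, j ≤ n on Tℝⁿ, and let B̃ be the quadric q₁²/A² + Σ_{k=2}^n q_k²/B² = 1 in (ℝⁿ, ‖·‖_a) with ‖q‖_a² = q₁²/(1+a²) + Σ_{k=2}^n q_k². Then every L_{ij} with 2 ≤ i,j ≤ n is conserved under elastic reflection at B̃: if q ∈ B̃, n(q) = ((1+a²)q₁/A², q₂/B², …, qₙ/B²) is the a-gradient normal, and v' = v − 2(⟨v,n⟩_a/⟨n,n⟩_a) n, then q_i v'_j − q_j v'_i = q_i v_j − q_j v_i for all 2 ≤ i,j ≤ n. -/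
/-- Elastic reflection at the quadric
`q₁²/A² + Σ_{k=2}^n q_k²/B² = 1` in `(ℝⁿ, ‖·‖_a)` conserves every angular momentum
component `L_{ij} = qᵢ q̇ⱼ − qⱼ q̇ᵢ` with `2 ≤ i, j ≤ n`. -/
theorem stmt_18 (n : ℕ) (A B a : ℝ) (hA : 0 < A) (hB : 0 < B)
    (innerA : (ℕ → ℝ) → (ℕ → ℝ) → ℝ)
    (hinnerA : ∀ u w, innerA u w =
      u 1 * w 1 / (1+a^2) + ∑ k ∈ Finset.Icc 2 n, u k * w k)
    (q v nrm v' : ℕ → ℝ)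
    (hq : (q 1)^2/A^2 + (∑ k ∈ Finset.Icc 2 n, (q k)^2)/B^2 = 1)
    (hnrm : ∀ k, nrm k = if k = 1 then (1+a^2) * q 1 / A^2
        else if k ≤ n then q k / B^2 else 0)
    (hv' : ∀ k, v' k = v k - 2 * (innerA v nrm / innerA nrm nrm) * nrm k) :
    ∀ i j, 2 ≤ i → i ≤ n → 2 ≤ j → j ≤ n →
      q i * v' j - q j * v' i = q i * v j - q j * v i := by
  intro i j h2i hin h2j hjn
  have hi1 : i ≠ 1 := by omega
  have hj1 : j ≠ 1 := by omega
  rw [hv' i, hv' j, hnrm i, hnrm j, if_neg hi1, if_neg hj1, if_pos hin, if_pos hjn]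
  ring
end
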